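/- Let x, y ∈ X, and let a, b be two distinct points of the Gromov boundary of a δ-hyperbolic geodesic space X. Then there is a constant M₁ > 0 such that the Gromov product (f(n) | g(m))_y ≤ M₁ for all geodesic rays f from x to a and g from y to b and all n, m ≥ 0. -/

import Mathlib

open scoped NNReal

/-- δ-hyperbolicity via the Gromov four-point condition. -/
def IsDeltaHyperbolic (X : Type*) [MetricSpace X] (δ : ℝ) : Prop :=
  ∀ x y z w : X,
    dist x y + dist z w ≤ max (dist x z + dist y w) (dist x w + dist y z) + 2 * δ

/-- A geodesic metric space. -/
def IsGeodesicSpace (X : Type*) [MetricSpace X] : Prop :=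
  ∀ x y : X, ∃ f : ℝ → X, f 0 = x ∧ f (dist x y) = y ∧
    ∀ s t : ℝ, s ∈ Set.Icc 0 (dist x y) → t ∈ Set.Icc 0 (dist x y) →
      dist (f s) (f t) = |s - t|

/-- A geodesic ray, parametrized by `ℝ≥0`. -/
def IsGeodesicRay {X : Type*} [MetricSpace X] (g : ℝ≥0 → X) : Prop :=
  ∀ s t : ℝ≥0, dist (g s) (g t) = |(s : ℝ) - (t : ℝ)|

/-- The Gromov product `(u|v)_y = (d(u,y) + d(v,y) − d(u,v))/2`. -/
noncomputable def gromovProd {X : Type*} [MetricSpace X] (y u v : X) : ℝ :=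
  (dist u y + dist v y - dist u v) / 2

/-- `h` is a geodesic ray from `y` to the boundary point determined by the
reference geodesic ray `a`. -/
def RayTo {X : Type*} [MetricSpace X] (y : X) (a : ℝ≥0 → X) (h : ℝ≥0 → X) : Prop :=
  IsGeodesicRay h ∧ h 0 = y ∧
    EMetric.hausdorffEdist (Set.range h) (Set.range a) ≠ ⊤

/-!
If two geodesic rays `a`, `b` had unbounded Gromov products `(a n | b m)_y`, the four-point
condition, applied along `a t, a n, b m, b t`, would give `(a t | b t)_y ≥ t - C`, i.e. a uniform
bound on `d(a t, b t)`, so the rays would be at finite Hausdorff distance. The same argument,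
applied to a ray `f` from `x` at finite Hausdorff distance from `a`, shows that `f` and `a`
fellow-travel: `d(f t, a t) ≤ 3 d(x, a 0) + 4δ`. Since the Gromov product is `1`-Lipschitz in
each argument, the bound for `(a n | b m)_y` transfers to `(f n | g m)_y`.
-/

section GromovProduct

variable {X : Type*} [MetricSpace X]

theorem gromovProd_comm (y u v : X) : gromovProd y u v = gromovProd y v u := by
  unfold gromovProd; rw [dist_comm u v]; ring

theorem dist_eq_sub_two_mul_gromovProd (y u v : X) :
    dist u v = dist u y + dist v y - 2 * gromovProd y u v := by
  unfold gromovProd; ring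

theorem gromovProd_le_dist_left (y u v : X) : gromovProd y u v ≤ dist u y := by
  have := dist_triangle v u y
  unfold gromovProd; rw [dist_comm u v]; linarith

theorem dist_sub_dist_le_gromovProd (y u v : X) : dist u y - dist u v ≤ gromovProd y u v := by
  have := dist_triangle u v y
  unfold gromovProd; linarith

theorem gromovProd_le_add_dist_add_dist (y u v u' v' : X) :
    gromovProd y u v ≤ gromovProd y u' v' + dist u u' + dist v v' := by
  have := dist_triangle u u' y
  have := dist_triangle v v' y
  have := dist_triangle4 u' u v v'
  unfold gromovProd; rw [dist_comm u' u] at *; linarith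

theorem IsDeltaHyperbolic.sub_le_gromovProd {δ : ℝ} (hX : IsDeltaHyperbolic X δ)
    {y u v w : X} {c : ℝ} (huv : c ≤ gromovProd y u v) (hvw : c ≤ gromovProd y v w) :
    c - δ ≤ gromovProd y u w := by
  have h := hX u w v y
  rw [dist_comm w v] at h
  unfold gromovProd at *
  rcases max_cases (dist u v + dist w y) (dist u y + dist v w) with
    ⟨hmax, -⟩ | ⟨hmax, -⟩ <;> rw [hmax] at h <;> linarith

end GromovProduct

namespace IsGeodesicRay

variable {X : Type*} [MetricSpace X] {a : ℝ≥0 → X}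

theorem dist_apply_zero (ha : IsGeodesicRay a) (t : ℝ≥0) : dist (a t) (a 0) = t := by
  simp [ha t 0]

theorem dist_of_le (ha : IsGeodesicRay a) {s t : ℝ≥0} (hst : s ≤ t) :
    dist (a s) (a t) = t - s := by
  rw [ha s t, abs_of_nonpos (by simpa using hst), neg_sub]

theorem dist_le_add (ha : IsGeodesicRay a) (y : X) (t : ℝ≥0) :
    dist (a t) y ≤ t + dist (a 0) y := by
  simpa [ha.dist_apply_zero] using dist_triangle (a t) (a 0) y

theorem sub_le_dist (ha : IsGeodesicRay a) (y : X) (t : ℝ≥0) :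
    t - dist (a 0) y ≤ dist (a t) y := by
  have := dist_triangle (a t) y (a 0)
  rw [ha.dist_apply_zero, dist_comm y] at this
  linarith

theorem sub_le_gromovProd (ha : IsGeodesicRay a) (y : X) {t n : ℝ≥0} (htn : t ≤ n) :
    t - dist (a 0) y ≤ gromovProd y (a t) (a n) := by
  have := ha.sub_le_dist y t
  have := ha.sub_le_dist y n
  unfold gromovProd; rw [ha.dist_of_le htn]; linarith

end IsGeodesicRay

theorem hausdorffEDist_range_le_of_dist_le {ι X : Type*} [MetricSpace X] {a b : ι → X} {C : ℝ}
    (h : ∀ i, dist (a i) (b i) ≤ C) :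
    Metric.hausdorffEDist (Set.range a) (Set.range b) ≤ ENNReal.ofReal C := by
  refine Metric.hausdorffEDist_le_of_mem_edist ?_ ?_ <;> rintro _ ⟨i, rfl⟩
  · exact ⟨b i, Set.mem_range_self i, by rw [edist_dist]; exact ENNReal.ofReal_le_ofReal (h i)⟩
  · exact ⟨a i, Set.mem_range_self i,
      by rw [edist_dist, dist_comm]; exact ENNReal.ofReal_le_ofReal (h i)⟩

namespace IsDeltaHyperbolic

variable {X : Type*} [MetricSpace X] {δ : ℝ} {a b : ℝ≥0 → X}

theorem nonneg (hX : IsDeltaHyperbolic X δ) (x : X) : 0 ≤ δ := by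
  simpa using hX x x x x

theorem dist_le_of_le_gromovProd (hX : IsDeltaHyperbolic X δ) (ha : IsGeodesicRay a)
    (hb : IsGeodesicRay b) {y : X} {t n m : ℝ≥0}
    (h : t + dist (a 0) y + dist (b 0) y ≤ gromovProd y (a n) (b m)) :
    dist (a t) (b t) ≤ 3 * dist (a 0) y + 3 * dist (b 0) y + 4 * δ := by
  have hra := dist_nonneg (x := a 0) (y := y)
  have hrb := dist_nonneg (x := b 0) (y := y)
  have hδ := hX.nonneg y
  have htn : (t : ℝ) ≤ n := by
    linarith [gromovProd_le_dist_left y (a n) (b m), ha.dist_le_add y n]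
  have htm : (t : ℝ) ≤ m := by
    linarith [gromovProd_le_dist_left y (b m) (a n), gromovProd_comm y (a n) (b m),
      hb.dist_le_add y m]
  set c := (t : ℝ) - dist (a 0) y - dist (b 0) y
  have hat : c ≤ gromovProd y (a t) (a n) := by
    linarith [ha.sub_le_gromovProd y (t := t) (n := n) (mod_cast htn)]
  have hbt : c - δ ≤ gromovProd y (b m) (b t) := by
    linarith [hb.sub_le_gromovProd y (t := t) (n := m) (mod_cast htm),
      gromovProd_comm y (b m) (b t)]
  have hatbm : c - δ ≤ gromovProd y (a t) (b m) := hX.sub_le_gromovProd hat (by linarith)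
  have hatbt : c - δ - δ ≤ gromovProd y (a t) (b t) := hX.sub_le_gromovProd hatbm hbt
  rw [dist_eq_sub_two_mul_gromovProd y]
  linarith [ha.dist_le_add y t, hb.dist_le_add y t]

theorem exists_gromovProd_le_of_hausdorffEDist_eq_top (hX : IsDeltaHyperbolic X δ)
    (ha : IsGeodesicRay a) (hb : IsGeodesicRay b) (y : X)
    (hab : Metric.hausdorffEDist (Set.range a) (Set.range b) = ⊤) :
    ∃ S : ℝ, ∀ n m : ℝ≥0, gromovProd y (a n) (b m) ≤ S := by
  by_contra! hunbdd
  have hfellow (t : ℝ≥0) :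
      dist (a t) (b t) ≤ 3 * dist (a 0) y + 3 * dist (b 0) y + 4 * δ := by
    obtain ⟨n, m, h⟩ := hunbdd (t + dist (a 0) y + dist (b 0) y)
    exact hX.dist_le_of_le_gromovProd ha hb h.le
  exact ENNReal.ofReal_ne_top (top_le_iff.mp (hab.symm.trans_le
    (hausdorffEDist_range_le_of_dist_le hfellow)))

theorem dist_le_of_rayTo (hX : IsDeltaHyperbolic X δ) (ha : IsGeodesicRay a) {x : X}
    {f : ℝ≥0 → X} (hf : RayTo x a f) (t : ℝ≥0) :
    dist (f t) (a t) ≤ 3 * dist x (a 0) + 4 * δ := by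
  obtain ⟨hf, rfl, hfin⟩ := hf
  obtain ⟨N, hN⟩ := exists_nat_gt
    (t + 2 * dist (f 0) (a 0) + (Metric.hausdorffDist (Set.range f) (Set.range a) + 1))
  obtain ⟨_, ⟨S, rfl⟩, hS⟩ := Metric.exists_dist_lt_of_hausdorffDist_lt
    (Set.mem_range_self (N : ℝ≥0)) (lt_add_one _) hfin
  have h : t + dist (f 0) (a 0) + dist (a 0) (a 0) ≤ gromovProd (a 0) (f N) (a S) := by
    have := dist_sub_dist_le_gromovProd (a 0) (f N) (a S)
    have := hf.sub_le_dist (a 0) N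
    simp only [NNReal.coe_natCast, dist_self] at *
    linarith
  simpa using hX.dist_le_of_le_gromovProd hf ha h

end IsDeltaHyperbolic

theorem gromovProd_bounded_of_distinct_boundary_general {X : Type*} [MetricSpace X]
    (δ : ℝ) (hhyp : IsDeltaHyperbolic X δ)
    (x y : X) (a b : ℝ≥0 → X) (ha : IsGeodesicRay a) (hb : IsGeodesicRay b)
    (hab : EMetric.hausdorffEdist (Set.range a) (Set.range b) = ⊤) :
    ∃ M₁ : ℝ, 0 < M₁ ∧ ∀ f g : ℝ≥0 → X, RayTo x a f → RayTo y b g →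
      ∀ n m : ℝ≥0, gromovProd y (f n) (g m) ≤ M₁ := by
  obtain ⟨S, hS⟩ := hhyp.exists_gromovProd_le_of_hausdorffEDist_eq_top ha hb y hab
  refine ⟨max 1 (S + 3 * dist x (a 0) + 3 * dist y (b 0) + 8 * δ), by positivity, ?_⟩
  intro f g hf hg n m
  calc gromovProd y (f n) (g m)
      ≤ gromovProd y (a n) (b m) + dist (f n) (a n) + dist (g m) (b m) :=
        gromovProd_le_add_dist_add_dist y _ _ _ _
    _ ≤ S + (3 * dist x (a 0) + 4 * δ) + (3 * dist y (b 0) + 4 * δ) := by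
        gcongr
        exacts [hS n m, hhyp.dist_le_of_rayTo ha hf n, hhyp.dist_le_of_rayTo hb hg m]
    _ ≤ _ := le_max_of_le_right (by linarith)

/-- For distinct boundary points `a ≠ b` (represented by reference geodesic rays at
infinite Hausdorff distance), the Gromov products `(f(n) | g(m))_y` over all rays
`f` from `x` to `a` and `g` from `y` to `b` are uniformly bounded by some `M₁ > 0`. -/
theorem gromovProd_bounded_of_distinct_boundary {X : Type*} [MetricSpace X]
    (δ : ℝ) (hδ : 0 ≤ δ) (hhyp : IsDeltaHyperbolic X δ) (hgeo : IsGeodesicSpace X)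
    (x y : X) (a b : ℝ≥0 → X) (ha : IsGeodesicRay a) (hb : IsGeodesicRay b)
    (hab : EMetric.hausdorffEdist (Set.range a) (Set.range b) = ⊤) :
    ∃ M₁ : ℝ, 0 < M₁ ∧ ∀ f g : ℝ≥0 → X, RayTo x a f → RayTo y b g →
      ∀ n m : ℝ≥0, gromovProd y (f n) (g m) ≤ M₁ :=
  gromovProd_bounded_of_distinct_boundary_general δ hhyp x y a b ha hb hab
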